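/- arXiv:math/0504473 — 6 statements merged into one kernel-verified Lean document; each statement's English description precedes it below -/
import Mathlib

section
/- Let n ≥ 1, let f : ℝⁿ → ℝⁿ be a Lipschitz map, and let A ⊆ ℝⁿ be a measurable set. Then ∫⁻_{A} |det Df(x)| dvol(x) ≥ ∫⁻_{ℝⁿ} card(A ∩ f⁻¹({y})) dvol(y), where card denotes the extended-natural-number cardinality of a set (valued in [0,∞]) and the integrals are lower Lebesgue integrals valued in [0,∞]. -/
/-!
Cut `s` into the finitely many measurable pieces on which the first `k` sets of a countable
separating family have a constant membership pattern. The number of pieces whose image contains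
`y` integrates to at most `∑ ν (f '' piece) ≤ ρ s`. As `k → ∞` the pieces separate the points of
each fibre, so this number eventually dominates any finite part of the fibre, and Fatou's lemma
gives `∫⁻ y, #(s ∩ f⁻¹{y}) ∂ν ≤ ρ s` whenever `ν (f '' t) ≤ ρ t` for measurable `t ⊆ s`.
For differentiable maps the Jacobian bound `μ (f '' t) ≤ ∫⁻ x in t, |det f' x| ∂μ` provides this
with `ρ = μ.withDensity |det f'|`. A Lipschitz map is differentiable off a null set (Rademacher),
and it maps null sets to null sets, so that set does not affect almost every fibre.
-/

open MeasureTheory Set Filter Function MeasurableSpace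
open scoped NNReal ENNReal

theorem ENat.toENNReal_le_of_forall_natCast_le {e : ℕ∞} {a : ℝ≥0∞}
    (h : ∀ m : ℕ, (m : ℕ∞) ≤ e → (m : ℝ≥0∞) ≤ a) : (e : ℝ≥0∞) ≤ a := by
  induction e using ENat.recTopCoe with
  | top => simpa [← ENNReal.iSup_natCast] using h
  | coe n => exact_mod_cast h n le_rfl

section FiberCount

variable {X Y : Type*} [MeasurableSpace X] [CountablyGenerated X]

noncomputable def truncatedCode (k : ℕ) (x : X) : Fin k → Bool := fun i => mapNatBool X x i

theorem measurable_truncatedCode (k : ℕ) : Measurable (truncatedCode (X := X) k) :=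
  measurable_pi_lambda _ fun i => (measurable_pi_apply (i : ℕ)).comp (measurable_mapNatBool X)

section Pieces

variable [MeasurableSpace Y]

noncomputable def pieceImageCount (ν : Measure Y) (f : X → Y) (s : Set X) (k : ℕ) (y : Y) :
    ℝ≥0∞ :=
  ∑ σ, (toMeasurable ν (f '' (s ∩ truncatedCode k ⁻¹' {σ}))).indicator 1 y

theorem measurable_pieceImageCount (ν : Measure Y) (f : X → Y) (s : Set X) (k : ℕ) :
    Measurable (pieceImageCount ν f s k) :=
  Finset.measurable_sum _ fun _ _ => measurable_one.indicator (measurableSet_toMeasurable _ _)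

theorem lintegral_pieceImageCount_le {ν : Measure Y} {ρ : Measure X} {f : X → Y} {s : Set X}
    (hs : MeasurableSet s) (himage : ∀ t ⊆ s, MeasurableSet t → ν (f '' t) ≤ ρ t) (k : ℕ) :
    ∫⁻ y, pieceImageCount ν f s k y ∂ν ≤ ρ s := by
  have hpiece (σ : Fin k → Bool) : MeasurableSet (truncatedCode (X := X) k ⁻¹' {σ}) :=
    measurable_truncatedCode k (measurableSet_singleton σ)
  calc ∫⁻ y, pieceImageCount ν f s k y ∂ν
      = ∑ σ, ν (f '' (s ∩ truncatedCode k ⁻¹' {σ})) := by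
        simp only [pieceImageCount]
        rw [lintegral_finsetSum _ fun _ _ =>
          measurable_one.indicator (measurableSet_toMeasurable _ _)]
        simp only [lintegral_indicator_one (measurableSet_toMeasurable _ _), measure_toMeasurable]
    _ ≤ ∑ σ, ρ.restrict s (truncatedCode k ⁻¹' {σ}) := by
        gcongr with σ
        rw [Measure.restrict_apply (hpiece σ), inter_comm _ s]
        exact himage _ inter_subset_left (hs.inter (hpiece σ))
    _ = ρ s := by
        rw [sum_measure_preimage_singleton _ fun σ _ => hpiece σ, Finset.coe_univ, preimage_univ,
          Measure.restrict_apply_univ]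

theorem encard_image_truncatedCode_le_pieceImageCount (ν : Measure Y) (f : X → Y) (s : Set X)
    (k : ℕ) (y : Y) :
    ((truncatedCode k '' (s ∩ f ⁻¹' {y})).encard : ℝ≥0∞) ≤ pieceImageCount ν f s k y := by
  classical
  set T := fun σ => toMeasurable ν (f '' (s ∩ truncatedCode k ⁻¹' {σ}))
  have hsub : truncatedCode k '' (s ∩ f ⁻¹' {y}) ⊆ {σ | y ∈ T σ} := by
    rintro _ ⟨x, ⟨hxs, hxy⟩, rfl⟩
    exact subset_toMeasurable _ _ ⟨x, ⟨hxs, rfl⟩, hxy⟩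
  calc ((truncatedCode k '' (s ∩ f ⁻¹' {y})).encard : ℝ≥0∞)
      ≤ ({σ | y ∈ T σ}.encard : ℝ≥0∞) := ENat.toENNReal_mono (encard_le_encard hsub)
    _ = pieceImageCount ν f s k y := by
        simp [pieceImageCount, T, indicator_apply, Finset.sum_boole, encard_eq_coe_toFinset_card]

end Pieces

variable [MeasurableSpace.SeparatesPoints X]

theorem eventually_truncatedCode_ne {x y : X} (hxy : x ≠ y) :
    ∀ᶠ k in atTop, truncatedCode k x ≠ truncatedCode k y := by
  obtain ⟨i, hi⟩ := Function.ne_iff.mp ((injective_mapNatBool X).ne hxy)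
  filter_upwards [eventually_gt_atTop i] with k hik hcode
  exact hi (congrFun hcode ⟨i, hik⟩)

theorem Set.Finite.eventually_injOn_truncatedCode {F : Set X} (hF : F.Finite) :
    ∀ᶠ k in atTop, InjOn (truncatedCode k) F := by
  have hpairs : ∀ x ∈ F, ∀ᶠ k in atTop, ∀ y ∈ F, x ≠ y → truncatedCode k x ≠ truncatedCode k y :=
    fun x _ => hF.eventually_all.mpr fun _ _ =>
      eventually_imp_distrib_left.mpr eventually_truncatedCode_ne
  filter_upwards [hF.eventually_all.mpr hpairs] with k hk x hx y hy hxy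
  by_contra hne
  exact hk x hx y hy hne hxy

theorem eventually_le_encard_image_truncatedCode {t : Set X} {m : ℕ} (hm : (m : ℕ∞) ≤ t.encard) :
    ∀ᶠ k in atTop, (m : ℕ∞) ≤ (truncatedCode k '' t).encard := by
  obtain ⟨F, hFt, hFm⟩ := exists_subset_encard_eq hm
  filter_upwards [(finite_of_encard_eq_coe hFm).eventually_injOn_truncatedCode] with k hk
  calc (m : ℕ∞) = (truncatedCode k '' F).encard := by rw [hk.encard_image, hFm]
    _ ≤ (truncatedCode k '' t).encard := encard_le_encard (image_mono hFt)

variable [MeasurableSpace Y]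

theorem encard_inter_preimage_le_liminf_pieceImageCount (ν : Measure Y) (f : X → Y) (s : Set X)
    (y : Y) :
    ((s ∩ f ⁻¹' {y}).encard : ℝ≥0∞) ≤ liminf (fun k => pieceImageCount ν f s k y) atTop := by
  refine ENat.toENNReal_le_of_forall_natCast_le fun m hm =>
    le_liminf_of_le (by isBoundedDefault) ?_
  filter_upwards [eventually_le_encard_image_truncatedCode hm] with k hk
  exact (ENat.toENNReal_mono hk).trans (encard_image_truncatedCode_le_pieceImageCount ν f s k y)

theorem lintegral_encard_inter_preimage_le {ν : Measure Y} {ρ : Measure X} {f : X → Y}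
    {s : Set X} (hs : MeasurableSet s) (himage : ∀ t ⊆ s, MeasurableSet t → ν (f '' t) ≤ ρ t) :
    ∫⁻ y, ((s ∩ f ⁻¹' {y}).encard : ℝ≥0∞) ∂ν ≤ ρ s :=
  calc ∫⁻ y, ((s ∩ f ⁻¹' {y}).encard : ℝ≥0∞) ∂ν
      ≤ ∫⁻ y, liminf (fun k => pieceImageCount ν f s k y) atTop ∂ν :=
        lintegral_mono (encard_inter_preimage_le_liminf_pieceImageCount ν f s)
    _ ≤ liminf (fun k => ∫⁻ y, pieceImageCount ν f s k y ∂ν) atTop :=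
        lintegral_liminf_le (measurable_pieceImageCount ν f s)
    _ ≤ ρ s := liminf_le_of_frequently_le' (Frequently.of_forall
        (lintegral_pieceImageCount_le hs himage))

end FiberCount

section AddHaar

variable {E : Type*} [NormedAddCommGroup E] [NormedSpace ℝ E] [FiniteDimensional ℝ E]
  [MeasurableSpace E] [BorelSpace E] (μ : Measure E) [μ.IsAddHaarMeasure]

/-- `μ` is equivalent to the Hausdorff measure `μH[finrank ℝ E]`, which a Lipschitz map
enlarges by at most the factor `K ^ finrank ℝ E`. -/
theorem LipschitzOnWith.addHaar_image_eq_zero {K : ℝ≥0} {f : E → E} {s : Set E}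
    (hf : LipschitzOnWith K f s) (hs : μ s = 0) : μ (f '' s) = 0 := by
  set d := Module.finrank ℝ E
  have hH : μH[(d : ℝ)] s = 0 :=
    Measure.absolutelyContinuous_isAddHaarMeasure μH[(d : ℝ)] μ hs
  refine Measure.absolutelyContinuous_isAddHaarMeasure μ μH[(d : ℝ)] (le_antisymm ?_ zero_le)
  calc μH[(d : ℝ)] (f '' s) ≤ (K : ℝ≥0∞) ^ (d : ℝ) * μH[(d : ℝ)] s :=
        hf.hausdorffMeasure_image_le d.cast_nonneg
    _ = 0 := by rw [hH, mul_zero]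

theorem lintegral_encard_inter_preimage_le_lintegral_abs_det_fderiv {s : Set E} {f : E → E}
    {f' : E → E →L[ℝ] E} (hs : MeasurableSet s) (hf' : ∀ x ∈ s, HasFDerivWithinAt f (f' x) s x) :
    ∫⁻ y, ((s ∩ f ⁻¹' {y}).encard : ℝ≥0∞) ∂μ ≤ ∫⁻ x in s, ENNReal.ofReal |(f' x).det| ∂μ := by
  rw [← withDensity_apply _ hs]
  refine lintegral_encard_inter_preimage_le hs fun t hts ht => ?_
  rw [withDensity_apply _ ht]
  exact addHaar_image_le_lintegral_abs_det_fderiv μ ht fun x hx => (hf' x (hts hx)).mono hts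

end AddHaar

theorem lintegral_abs_det_fderiv_ge_lintegral_encard_fiber_general
    (n : ℕ)
    (f : EuclideanSpace ℝ (Fin n) → EuclideanSpace ℝ (Fin n))
    (K : NNReal) (hf : LipschitzWith K f)
    (A : Set (EuclideanSpace ℝ (Fin n))) (hA : MeasurableSet A) :
    ∫⁻ y, ((A ∩ f ⁻¹' {y}).encard : ENNReal) ∂volume ≤
      ∫⁻ x in A, ENNReal.ofReal |(fderiv ℝ f x).det| ∂volume := by
  set s := A ∩ {x | DifferentiableAt ℝ f x}
  have hs : MeasurableSet s := hA.inter (measurableSet_of_differentiableAt ℝ f)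
  have hbad_null : volume (A \ s) = 0 :=
    measure_mono_null (fun x hx hdiff => hx.2 ⟨hx.1, hdiff⟩) (ae_iff.mp hf.ae_differentiableAt)
  have himage_null : volume (f '' (A \ s)) = 0 :=
    hf.lipschitzOnWith.addHaar_image_eq_zero volume hbad_null
  have hfiber : ∀ᵐ y, A ∩ f ⁻¹' {y} = s ∩ f ⁻¹' {y} := by
    filter_upwards [measure_eq_zero_iff_ae_notMem.mp himage_null] with y hy
    refine subset_antisymm (fun x hx => ⟨⟨hx.1, ?_⟩, hx.2⟩)
      (inter_subset_inter_left _ inter_subset_left)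
    by_contra hdiff
    exact hy ⟨x, ⟨hx.1, fun hxs => hdiff hxs.2⟩, hx.2⟩
  calc ∫⁻ y, ((A ∩ f ⁻¹' {y}).encard : ℝ≥0∞)
      = ∫⁻ y, ((s ∩ f ⁻¹' {y}).encard : ℝ≥0∞) :=
        lintegral_congr_ae (hfiber.mono fun y hy => congrArg _ (congrArg _ hy))
    _ ≤ ∫⁻ x in s, ENNReal.ofReal |(fderiv ℝ f x).det| :=
        lintegral_encard_inter_preimage_le_lintegral_abs_det_fderiv volume hs
          fun x hx => hx.2.hasFDerivAt.hasFDerivWithinAt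
    _ ≤ ∫⁻ x in A, ENNReal.ofReal |(fderiv ℝ f x).det| := lintegral_mono_set inter_subset_left

/-- Change-of-variables inequality for Lipschitz maps (area formula inequality):
the integral of the absolute Jacobian over a measurable set `A` dominates the
integral of the counting function of fibers over `A`. -/
theorem lintegral_abs_det_fderiv_ge_lintegral_encard_fiber
    (n : ℕ) (hn : 1 ≤ n)
    (f : EuclideanSpace ℝ (Fin n) → EuclideanSpace ℝ (Fin n))
    (K : NNReal) (hf : LipschitzWith K f)
    (A : Set (EuclideanSpace ℝ (Fin n))) (hA : MeasurableSet A) :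
    ∫⁻ y, ((A ∩ f ⁻¹' {y}).encard : ENNReal) ∂volume ≤
      ∫⁻ x in A, ENNReal.ofReal |(fderiv ℝ f x).det| ∂volume :=
  lintegral_abs_det_fderiv_ge_lintegral_encard_fiber_general n f K hf A hA
end

section
/- Let X be a Hausdorff topological space, Y a topological space equipped with a Borel measure μ that is positive on every nonempty open set, and let f : X → Y be an open map. If the set of points y ∈ Y that have at least two distinct preimages under f (i.e. {y | ∃ x₁ x₂, x₁ ≠ x₂ ∧ f x₁ = y ∧ f x₂ = y}) has μ-measure zero, then f is injective. -/
open MeasureTheory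

/-! Two distinct points with the same image have disjoint open neighbourhoods `U` and `V`;
since `f` is open, `f '' U ∩ f '' V` is a nonempty open set of points with two preimages,
so it cannot be null for a measure that charges every nonempty open set. -/

def multiplePoints {X Y : Type*} (f : X → Y) : Set Y :=
  {y | ∃ x₁ x₂ : X, x₁ ≠ x₂ ∧ f x₁ = y ∧ f x₂ = y}

theorem IsOpenMap.nonempty_interior_multiplePoints {X Y : Type*} [TopologicalSpace X]
    [T2Space X] [TopologicalSpace Y] {f : X → Y} (hf : IsOpenMap f)
    (hinj : ¬ Function.Injective f) : (interior (multiplePoints f)).Nonempty := by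
  obtain ⟨a, b, hab, hne⟩ := Function.not_injective_iff.mp hinj
  obtain ⟨U, V, hU, hV, haU, hbV, hUV⟩ := t2_separation hne
  have hsub : f '' U ∩ f '' V ⊆ multiplePoints f := by
    rintro y ⟨⟨x₁, hx₁, rfl⟩, ⟨x₂, hx₂, hx₂y⟩⟩
    exact ⟨x₁, x₂, hUV.ne_of_mem hx₁ hx₂, rfl, hx₂y⟩
  exact ⟨f a, interior_maximal hsub ((hf U hU).inter (hf V hV))
    ⟨⟨a, haU, rfl⟩, ⟨b, hbV, hab.symm⟩⟩⟩

theorem openMap_injective_of_null_double_points_general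
    {X Y : Type*} [TopologicalSpace X] [T2Space X] [TopologicalSpace Y]
    [MeasurableSpace Y] (μ : Measure Y)
    (hμ : ∀ V : Set Y, IsOpen V → V.Nonempty → 0 < μ V)
    (f : X → Y) (hf : IsOpenMap f)
    (hnull : μ {y : Y | ∃ x₁ x₂ : X, x₁ ≠ x₂ ∧ f x₁ = y ∧ f x₂ = y} = 0) :
    Function.Injective f := by
  by_contra hinj
  have : μ.IsOpenPosMeasure := ⟨fun V hV hne => (hμ V hV hne).ne'⟩
  exact (μ.measure_pos_of_nonempty_interior (hf.nonempty_interior_multiplePoints hinj)).ne' hnull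

/-- An open map from a Hausdorff space to a space with a Borel measure that is positive on
nonempty open sets, whose set of points with at least two preimages is null, is injective. -/
theorem openMap_injective_of_null_double_points
    {X Y : Type*} [TopologicalSpace X] [T2Space X] [TopologicalSpace Y]
    [MeasurableSpace Y] [BorelSpace Y] (μ : Measure Y)
    (hμ : ∀ V : Set Y, IsOpen V → V.Nonempty → 0 < μ V)
    (f : X → Y) (hf : IsOpenMap f)
    (hnull : μ {y : Y | ∃ x₁ x₂ : X, x₁ ≠ x₂ ∧ f x₁ = y ∧ f x₂ = y} = 0) :
    Function.Injective f :=
  openMap_injective_of_null_double_points_general μ hμ f hf hnull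
end

section
/- Let n, m ≥ 1, let U ⊆ ℝⁿ be an open convex set, and let f : U → ℝᵐ be a locally Lipschitz map such that for almost every x ∈ U, f is differentiable at x and the operator norm of its derivative satisfies ‖Df(x)‖ ≤ 1. Then f is 1-Lipschitz on U: ‖f(x) − f(y)‖ ≤ ‖x − y‖ for all x, y ∈ U. -/
open MeasureTheory Set Filter Topology Metric
open scoped NNReal Interval

/-! Almost every line parallel to `y - x` meets the null set where the derivative bound fails in a
null set (Fubini and translation invariance). Along such a line near the segment `[x, y]`, `f` is
Lipschitz, hence absolutely continuous after composing with a norming functional, so the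
fundamental theorem of calculus bounds its increment by `‖y - x‖`; these lines are dense, and
continuity of `f` carries the bound to `[x, y]` itself. This works on every open convex set where
`f` is Lipschitz, in particular on small balls, and a map that is locally `1`-Lipschitz on a
convex set is `1`-Lipschitz on it. -/

theorem ae_ae_add_smul_notMem {E : Type*} [NormedAddCommGroup E] [NormedSpace ℝ E]
    [MeasurableSpace E] [BorelSpace E] [SecondCountableTopology E]
    (μ : Measure E) [μ.IsAddRightInvariant] [SFinite μ] {N : Set E} (hN : μ N = 0) (v : E) :
    ∀ᵐ z ∂μ, ∀ᵐ t : ℝ, z + t • v ∉ N := by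
  set M := toMeasurable μ N
  have hM : MeasurableSet {p : E × ℝ | p.1 + p.2 • v ∉ M} :=
    ((measurable_fst.add (measurable_snd.smul_const v)) (measurableSet_toMeasurable μ N)).compl
  have hMt (t : ℝ) : ∀ᵐ z ∂μ, z + t • v ∉ M := by
    rw [ae_iff]
    simp only [not_not]
    exact (measure_preimage_add_right μ (t • v) M).trans (measure_toMeasurable N ▸ hN)
  filter_upwards [(Measure.ae_ae_comm (μ := μ) (ν := volume) hM).2 (ae_of_all _ hMt)] with z hz
  exact hz.mono fun t ht hN => ht (subset_toMeasurable μ N hN)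

theorem norm_sub_le_of_ae_norm_deriv_le {F : Type*} [NormedAddCommGroup F] [NormedSpace ℝ F]
    {g : ℝ → F} {K : ℝ≥0} {C a b : ℝ} (hab : a ≤ b) (hg : LipschitzOnWith K g (Icc a b))
    (hg' : ∀ᵐ t, t ∈ Icc a b → ∃ g', HasDerivAt g g' t ∧ ‖g'‖ ≤ C) :
    ‖g b - g a‖ ≤ C * (b - a) := by
  obtain ⟨ℓ, hℓ, hℓg⟩ := exists_dual_vector'' ℝ (g b - g a)
  have hac : AbsolutelyContinuousOnInterval (ℓ ∘ g) a b := by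
    refine LipschitzOnWith.absolutelyContinuousOnInterval (K := ‖ℓ‖₊ * K) ?_
    rw [uIcc_of_le hab]
    exact ℓ.lipschitz.comp_lipschitzOnWith hg
  have hderiv : ∀ᵐ t, t ∈ Ι a b → ‖deriv (ℓ ∘ g) t‖ ≤ C := by
    filter_upwards [hg'] with t ht htab
    obtain ⟨g', hg't, hg'C⟩ := ht (Ioc_subset_Icc_self (uIoc_of_le hab ▸ htab))
    rw [(ℓ.hasFDerivAt.comp_hasDerivAt t hg't).deriv]
    calc ‖ℓ g'‖ ≤ ‖ℓ‖ * ‖g'‖ := ℓ.le_opNorm g'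
      _ ≤ 1 * C := mul_le_mul hℓ hg'C (norm_nonneg _) zero_le_one
      _ = C := one_mul C
  calc ‖g b - g a‖ = ‖∫ t in a..b, deriv (ℓ ∘ g) t‖ := by
        rw [hac.integral_deriv_eq_sub, Function.comp_apply, Function.comp_apply, ← map_sub, hℓg]
        simp
    _ ≤ C * |b - a| := intervalIntegral.norm_integral_le_of_norm_le_const_ae hderiv
    _ = C * (b - a) := by rw [abs_of_nonneg (sub_nonneg.2 hab)]

theorem Convex.lipschitzOnWith_of_locally {E F : Type*} [SeminormedAddCommGroup E]
    [NormedSpace ℝ E] [PseudoMetricSpace F] {s : Set E} (hs : Convex ℝ s) {f : E → F} {K : ℝ≥0}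
    (hf : ∀ x ∈ s, ∃ t ∈ 𝓝[s] x, LipschitzOnWith K f t) : LipschitzOnWith K f s := by
  have hfc : ContinuousOn f s := fun x hx => by
    obtain ⟨t, ht, hft⟩ := hf x hx
    exact (hft.continuousOn x (mem_of_mem_nhdsWithin hx ht)).mono_of_mem_nhdsWithin ht
  refine LipschitzOnWith.of_dist_le_mul fun y hy x hx => ?_
  set γ : ℝ → E := fun t => AffineMap.lineMap x y t
  have hγs : MapsTo γ (Icc 0 1) s := fun t ht => hs.lineMap_mem hx hy ht
  have hγc : Continuous γ := AffineMap.lineMap_continuous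
  suffices ∀ t ∈ Icc (0 : ℝ) 1, dist (f (γ t)) (f x) ≤ K * dist x y * t by
    simpa [γ, dist_comm x y] using this 1 (right_mem_Icc.2 zero_le_one)
  refine image_le_of_liminf_slope_right_le_deriv_boundary (B' := fun _ => K * dist x y)
    ((continuous_id.dist continuous_const).comp_continuousOn (hfc.comp hγc.continuousOn hγs))
    (by simp [γ]) (by fun_prop)
    (fun t _ => (hasDerivWithinAt_id t _).const_mul _ |>.congr_deriv (mul_one _))
    fun t ht r hr => ?_
  obtain ⟨T, hT, hfT⟩ := hf (γ t) (hγs (Ico_subset_Icc_self ht))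
  have hγT : ∀ᶠ z in 𝓝[>] t, γ z ∈ T :=
    nhdsWithin_le_of_mem (Icc_mem_nhdsGT_of_mem ht)
      (hγc.continuousWithinAt.tendsto_nhdsWithin hγs hT)
  have hγtT : γ t ∈ T := mem_of_mem_nhdsWithin (hγs (Ico_subset_Icc_self ht)) hT
  refine Eventually.frequently <| (hγT.and self_mem_nhdsWithin).mono fun z ⟨hzT, hzt⟩ => ?_
  refine lt_of_le_of_lt ?_ hr
  rw [slope_def_field, div_le_iff₀ (sub_pos.2 hzt)]
  calc dist (f (γ z)) (f x) - dist (f (γ t)) (f x) ≤ dist (f (γ z)) (f (γ t)) :=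
        sub_le_iff_le_add.2 (dist_triangle _ _ _)
    _ ≤ K * dist (γ z) (γ t) := hfT.dist_le_mul _ hzT _ hγtT
    _ = K * dist x y * (z - t) := by
        rw [dist_lineMap_lineMap, Real.dist_eq, abs_of_pos (sub_pos.2 hzt)]; ring

section LipschitzOnWith

variable {E F : Type*} [NormedAddCommGroup E] [NormedSpace ℝ E] [NormedAddCommGroup F]
  [NormedSpace ℝ F] {V : Set E} {f : E → F} {K C : ℝ≥0}

theorem LipschitzOnWith.norm_sub_le_of_ae_norm_fderiv_le_on_segment (hVc : Convex ℝ V)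
    (hf : LipschitzOnWith K f V) {z v : E} (hz : z ∈ V) (hzv : z + v ∈ V)
    (hf' : ∀ᵐ t : ℝ, t ∈ Icc 0 1 →
      DifferentiableAt ℝ f (z + t • v) ∧ ‖fderiv ℝ f (z + t • v)‖ ≤ C) :
    ‖f (z + v) - f z‖ ≤ C * ‖v‖ := by
  have hline (t : ℝ) : HasDerivAt (fun s : ℝ => z + s • v) v t := by
    simpa using ((hasDerivAt_id t).smul_const v).const_add z
  have hmaps : MapsTo (fun t : ℝ => z + t • v) (Icc 0 1) V := fun _ ht =>
    hVc.add_smul_mem hz hzv ht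
  have hlip : LipschitzWith ‖v‖₊ (fun t : ℝ => z + t • v) :=
    LipschitzWith.of_dist_le_mul fun s t => by
      rw [dist_add_left, dist_eq_norm, dist_eq_norm, ← sub_smul, norm_smul, mul_comm]; rfl
  have := norm_sub_le_of_ae_norm_deriv_le (C := C * ‖v‖) zero_le_one
    (hf.comp hlip.lipschitzOnWith hmaps) (hf'.mono fun t ht htI => ?_)
  · simpa using this
  obtain ⟨hd, hC⟩ := ht htI
  refine ⟨_, hd.hasFDerivAt.comp_hasDerivAt t (hline t), ?_⟩
  exact (ContinuousLinearMap.le_opNorm _ _).trans (mul_le_mul_of_nonneg_right hC (norm_nonneg v))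

theorem LipschitzOnWith.of_ae_norm_fderiv_le [FiniteDimensional ℝ E] [MeasurableSpace E]
    [BorelSpace E] (μ : Measure E) [μ.IsAddHaarMeasure] (hV : IsOpen V) (hVc : Convex ℝ V)
    (hf : LipschitzOnWith K f V)
    (hf' : ∀ᵐ x ∂μ.restrict V, DifferentiableAt ℝ f x ∧ ‖fderiv ℝ f x‖ ≤ C) :
    LipschitzOnWith C f V := by
  set N := {p | ¬(p ∈ V → DifferentiableAt ℝ f p ∧ ‖fderiv ℝ f p‖ ≤ C)}
  have hN : μ N = 0 := ae_iff.1 ((ae_restrict_iff' hV.measurableSet).1 hf')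
  refine LipschitzOnWith.of_dist_le_mul fun y hy x hx => ?_
  set v := y - x
  have hxv : x + v = y := add_sub_cancel x y
  set W := V ∩ (· + v) ⁻¹' V
  have hW : IsOpen W := hV.inter (hV.preimage (continuous_add_const v))
  have hxW : x ∈ W := ⟨hx, by simpa [hxv] using hy⟩
  have hdense : W ⊆ closure (W ∩ {z | ∀ᵐ t : ℝ, z + t • v ∉ N}) :=
    (μ.dense_of_ae (ae_ae_add_smul_notMem μ hN v)).open_subset_closure_inter hW
  have hcont : ContinuousAt (fun z => ‖f (z + v) - f z‖) x := by
    have hfc (p) (hp : p ∈ V) : ContinuousAt f p := hf.continuousOn.continuousAt (hV.mem_nhds hp)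
    exact (((hfc y hy).comp_of_eq (continuous_add_const v).continuousAt hxv).sub
      (hfc x hx)).norm
  have hsegment : ∀ z ∈ W ∩ {z | ∀ᵐ t : ℝ, z + t • v ∉ N}, ‖f (z + v) - f z‖ ≤ C * ‖v‖ := by
    rintro z ⟨⟨hz, hzv⟩, hzN : ∀ᵐ t : ℝ, z + t • v ∉ N⟩
    refine hf.norm_sub_le_of_ae_norm_fderiv_le_on_segment hVc hz hzv (hzN.mono fun t ht htI => ?_)
    exact not_not.1 ht (hVc.add_smul_mem hz hzv htI)
  have key := ContinuousWithinAt.closure_le (hdense hxW) hcont.continuousWithinAt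
    continuousWithinAt_const hsegment
  rw [dist_eq_norm, dist_eq_norm]
  simpa [hxv] using key

end LipschitzOnWith

theorem lipschitz_of_ae_fderiv_norm_le_one_general
    (n m : ℕ)
    (U : Set (EuclideanSpace ℝ (Fin n))) (hUconv : Convex ℝ U)
    (f : EuclideanSpace ℝ (Fin n) → EuclideanSpace ℝ (Fin m))
    (hlip : ∀ x ∈ U, ∃ K : NNReal, ∃ t ∈ nhds x, t ⊆ U ∧ LipschitzOnWith K f t)
    (hder : ∀ᵐ x ∂(volume.restrict U),
      DifferentiableAt ℝ f x ∧ ‖fderiv ℝ f x‖ ≤ 1) :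
    ∀ x ∈ U, ∀ y ∈ U, ‖f x - f y‖ ≤ ‖x - y‖ := by
  have hloc : ∀ x ∈ U, ∃ t ∈ 𝓝[U] x, LipschitzOnWith 1 f t := by
    intro x hx
    obtain ⟨K, t, ht, htU, hft⟩ := hlip x hx
    obtain ⟨r, hr, hball⟩ := Metric.mem_nhds_iff.1 ht
    refine ⟨ball x r, mem_nhdsWithin_of_mem_nhds (ball_mem_nhds x hr), ?_⟩
    exact (hft.mono hball).of_ae_norm_fderiv_le volume isOpen_ball (convex_ball x r)
      (ae_restrict_of_ae_restrict_of_subset (hball.trans htU) (NNReal.coe_one ▸ hder))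
  intro x hx y hy
  simpa [dist_eq_norm] using (hUconv.lipschitzOnWith_of_locally hloc).dist_le_mul x hx y hy

/-- A locally Lipschitz map on an open convex set `U ⊆ ℝⁿ` whose derivative has operator
norm at most `1` almost everywhere is `1`-Lipschitz on `U`. -/
theorem lipschitz_of_ae_fderiv_norm_le_one
    (n m : ℕ) (hn : 1 ≤ n) (hm : 1 ≤ m)
    (U : Set (EuclideanSpace ℝ (Fin n))) (hU : IsOpen U) (hUconv : Convex ℝ U)
    (f : EuclideanSpace ℝ (Fin n) → EuclideanSpace ℝ (Fin m))
    (hlip : ∀ x ∈ U, ∃ K : NNReal, ∃ t ∈ nhds x, t ⊆ U ∧ LipschitzOnWith K f t)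
    (hder : ∀ᵐ x ∂(volume.restrict U),
      DifferentiableAt ℝ f x ∧ ‖fderiv ℝ f x‖ ≤ 1) :
    ∀ x ∈ U, ∀ y ∈ U, ‖f x - f y‖ ≤ ‖x - y‖ :=
  lipschitz_of_ae_fderiv_norm_le_one_general n m U hUconv f hlip hder
end

section
/- Let X be a compact metric space, Y a metric space, d ≥ 0, and let f : X → Y be a surjective 1-Lipschitz map. Suppose the d-dimensional Hausdorff measures satisfy μH^d(X) = μH^d(Y) < ∞. Then for every closed set A ⊆ X with μH^d(A) = 0, the saturated set f⁻¹(f(A)) also satisfies μH^d(f⁻¹(f(A))) = 0. -/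
open MeasureTheory Set

/-!
If `f` does not increase measure and is onto, then `f` maps the complement of `f⁻¹(B)` onto
`Bᶜ`, which has full measure when `B` is null; so `f⁻¹(B)ᶜ` already carries the whole (finite,
equal) mass of the source and `f⁻¹(B)` is null. A closed set of a compact space has compact,
hence closed, image, which makes its saturation measurable.
-/

theorem measure_preimage_eq_zero_of_measure_image_le {X Y : Type*} [MeasurableSpace X]
    [MeasurableSpace Y] {μ : Measure X} {ν : Measure Y} {f : X → Y}
    (hsurj : Function.Surjective f) (himage : ∀ s, ν (f '' s) ≤ μ s)
    (hvol : μ univ = ν univ) (hfin : μ univ ≠ ⊤) {B : Set Y}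
    (hB : NullMeasurableSet (f ⁻¹' B) μ) (hB0 : ν B = 0) : μ (f ⁻¹' B) = 0 := by
  have hcompl : μ univ ≤ μ (f ⁻¹' B)ᶜ := calc
    μ univ = ν Bᶜ := by
      rw [hvol, measure_of_measure_compl_eq_zero (s := Bᶜ) (by rwa [compl_compl])]
    _ = ν (f '' (f ⁻¹' Bᶜ)) := by rw [image_preimage_eq _ hsurj]
    _ ≤ μ (f ⁻¹' B)ᶜ := himage _
  rw [← compl_compl (f ⁻¹' B), measure_compl₀ hB.compl (measure_ne_top_of_subset
    (subset_univ _) hfin)]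
  exact tsub_eq_zero_of_le hcompl

theorem LipschitzWith.hausdorffMeasure_image_le_self {X Y : Type*} [EMetricSpace X]
    [EMetricSpace Y] [MeasurableSpace X] [BorelSpace X] [MeasurableSpace Y] [BorelSpace Y]
    {f : X → Y} (hf : LipschitzWith 1 f) {d : ℝ} (hd : 0 ≤ d) (s : Set X) :
    μH[d] (f '' s) ≤ μH[d] s := by
  simpa using hf.hausdorffMeasure_image_le hd s

/-- A `1`-Lipschitz surjection between a compact metric space and a metric space of equal
finite `d`-dimensional Hausdorff measure carries saturations of closed null sets to null sets:
if `A` is closed with `μH^d(A) = 0`, then `μH^d(f⁻¹(f(A))) = 0`. -/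
theorem saturation_of_null_set_is_null
    {X Y : Type*} [MetricSpace X] [CompactSpace X] [MetricSpace Y]
    [MeasurableSpace X] [BorelSpace X] [MeasurableSpace Y] [BorelSpace Y]
    (d : ℝ) (hd : 0 ≤ d)
    (f : X → Y) (hsurj : Function.Surjective f) (hlip : LipschitzWith 1 f)
    (hvol : μH[d] (Set.univ : Set X) = μH[d] (Set.univ : Set Y))
    (hfin : μH[d] (Set.univ : Set X) < ⊤) :
    ∀ A : Set X, IsClosed A → μH[d] A = 0 → μH[d] (f ⁻¹' (f '' A)) = 0 := by
  intro A hA hA0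
  have himage_null : μH[d] (f '' A) = 0 :=
    nonpos_iff_eq_zero.mp (hA0 ▸ hlip.hausdorffMeasure_image_le_self hd A)
  have hsaturation_measurable : MeasurableSet (f ⁻¹' (f '' A)) :=
    ((hA.isCompact.image hlip.continuous).isClosed.preimage hlip.continuous).measurableSet
  exact measure_preimage_eq_zero_of_measure_image_le hsurj
    (hlip.hausdorffMeasure_image_le_self hd) hvol hfin.ne
    hsaturation_measurable.nullMeasurableSet himage_null
end

section
/- Let n ≥ 1, let U ⊆ ℝⁿ be an open set with finite volume, and let f : U → ℝⁿ be a 1-Lipschitz map such that vol(f(U)) = vol(U). Then: (1) for almost every x ∈ U, f is differentiable at x and |det Df(x)| = 1; and (2) for almost every y ∈ f(U), the fiber U ∩ f⁻¹({y}) consists of exactly one point. -/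
/-!
A `1`-Lipschitz map does not increase Hausdorff measure, which on an inner product space is the
volume, so `vol (f '' W) ≤ vol W` for every `W ⊆ U`. As `U` has finite volume and `f` loses none
of it, equality holds for every measurable `W ⊆ U`; applied to `W₁`, `W₂` and `W₁ ∪ W₂` for
disjoint open `W₁, W₂`, it shows that `f '' W₁ ∩ f '' W₂` is null, and a countable basis turns
this into injectivity over almost every point. For the Jacobian, `‖Df‖ ≤ 1` gives `|det Df| ≤ 1`,
while the area inequality gives `vol U = vol (f '' U) ≤ ∫_U |det Df| ≤ vol U`, which forces
`|det Df| = 1` almost everywhere.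
-/

open MeasureTheory Measure Module Set ENNReal NNReal

theorem measure_inter_eq_zero_of_add_le_measure_union {α : Type*} [MeasurableSpace α]
    {μ : Measure α} {s t : Set α} (h : μ s + μ t ≤ μ (s ∪ t)) (hfin : μ (s ∪ t) ≠ ∞) :
    μ (s ∩ t) = 0 := by
  have hunion : μ (toMeasurable μ s ∪ toMeasurable μ t) = μ (s ∪ t) := by
    rw [measure_toMeasurable_union, measure_union_toMeasurable]
  have hsum := measure_union_add_inter (μ := μ) (toMeasurable μ s) (measurableSet_toMeasurable μ t)
  rw [measure_toMeasurable, measure_toMeasurable, hunion] at hsum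
  have hinter : μ (toMeasurable μ s ∩ toMeasurable μ t) = 0 := by
    refine le_antisymm ?_ zero_le
    rw [← ENNReal.add_le_add_iff_left hfin, hsum, add_zero]
    exact h
  exact measure_mono_null (inter_subset_inter (subset_toMeasurable μ s)
    (subset_toMeasurable μ t)) hinter

theorem ae_subsingleton_fiber_of_measure_image_inter_eq_zero {X Y : Type*} [TopologicalSpace X]
    [SecondCountableTopology X] [T2Space X] [MeasurableSpace Y] {μ : Measure Y} {f : X → Y}
    {U : Set X}
    (h : ∀ V₁ V₂, IsOpen V₁ → IsOpen V₂ → Disjoint V₁ V₂ →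
      μ (f '' (U ∩ V₁) ∩ f '' (U ∩ V₂)) = 0) :
    ∀ᵐ y ∂μ, (U ∩ f ⁻¹' {y}).Subsingleton := by
  obtain ⟨b, hbc, -, hb⟩ := TopologicalSpace.exists_countable_basis X
  set P : Set (Set X × Set X) := {V | V.1 ∈ b ∧ V.2 ∈ b ∧ Disjoint V.1 V.2}
  have hPc : P.Countable := (hbc.prod hbc).mono fun _ hV => mk_mem_prod hV.1 hV.2.1
  have hsep : ∀ᵐ y ∂μ, ∀ V ∈ P, y ∉ f '' (U ∩ V.1) ∩ f '' (U ∩ V.2) :=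
    (ae_ball_iff hPc).2 fun V ⟨hV₁, hV₂, hV⟩ => measure_eq_zero_iff_ae_notMem.1
      (h V.1 V.2 (hb.isOpen hV₁) (hb.isOpen hV₂) hV)
  filter_upwards [hsep] with y hy
  rintro x₁ ⟨hx₁U, hx₁⟩ x₂ ⟨hx₂U, hx₂⟩
  by_contra hne
  obtain ⟨W₁, W₂, hW₁, hW₂, hxW₁, hxW₂, hW⟩ := t2_separation hne
  obtain ⟨V₁, hV₁, hxV₁, hVW₁⟩ := hb.exists_subset_of_mem_open hxW₁ hW₁
  obtain ⟨V₂, hV₂, hxV₂, hVW₂⟩ := hb.exists_subset_of_mem_open hxW₂ hW₂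
  exact hy (V₁, V₂) ⟨hV₁, hV₂, hW.mono hVW₁ hVW₂⟩
    ⟨⟨x₁, ⟨hx₁U, hxV₁⟩, hx₁⟩, ⟨x₂, ⟨hx₂U, hxV₂⟩, hx₂⟩⟩

theorem IsSigmaCompact.measurableSet {X : Type*} [TopologicalSpace X] [T2Space X]
    [MeasurableSpace X] [BorelSpace X] {s : Set X} (hs : IsSigmaCompact s) : MeasurableSet s := by
  obtain ⟨K, hK, rfl⟩ := hs
  exact .iUnion fun n => (hK n).measurableSet

theorem IsOpen.measurableSet_image_of_continuousOn {X Y : Type*} [TopologicalSpace X]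
    [LocallyCompactSpace X] [SecondCountableTopology X] [TopologicalSpace Y] [T2Space Y]
    [MeasurableSpace Y] [BorelSpace Y] {U : Set X} (hU : IsOpen U) {f : X → Y}
    (hf : ContinuousOn f U) : MeasurableSet (f '' U) := by
  have : LocallyCompactSpace U := hU.locallyCompactSpace
  have hUσ : IsSigmaCompact U := isSigmaCompact_iff_sigmaCompactSpace.2 inferInstance
  exact (hUσ.image_of_continuousOn hf).measurableSet

theorem LipschitzOnWith.ae_differentiableAt_of_isOpen {E F : Type*} [NormedAddCommGroup E]
    [NormedSpace ℝ E] [FiniteDimensional ℝ E] [MeasurableSpace E] [BorelSpace E]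
    [NormedAddCommGroup F] [NormedSpace ℝ F] [FiniteDimensional ℝ F] {μ : Measure E}
    [μ.IsAddHaarMeasure] {K : ℝ≥0} {f : E → F} {U : Set E} (hU : IsOpen U)
    (hf : LipschitzOnWith K f U) : ∀ᵐ x ∂μ.restrict U, DifferentiableAt ℝ f x := by
  filter_upwards [hf.ae_differentiableWithinAt hU.measurableSet, ae_restrict_mem hU.measurableSet]
    with x hx hxU using hx.differentiableAt (hU.mem_nhds hxU)

section InnerProductSpace

variable {V : Type*} [NormedAddCommGroup V] [InnerProductSpace ℝ V] [FiniteDimensional ℝ V]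

section

variable [MeasurableSpace V] [BorelSpace V]

theorem LipschitzOnWith.volume_image_le {K : ℝ≥0} {f : V → V} {s : Set V}
    (hf : LipschitzOnWith K f s) : volume (f '' s) ≤ (K : ℝ≥0∞) ^ finrank ℝ V * volume s := by
  have hμH := hf.hausdorffMeasure_image_le (d := finrank ℝ V) (Nat.cast_nonneg _)
  rw [ENNReal.rpow_natCast] at hμH
  rw [← InnerProductSpace.euclideanHausdorffMeasure_eq_volume, euclideanHausdorffMeasure_def,
    Measure.smul_apply, Measure.smul_apply, ENNReal.smul_def, ENNReal.smul_def, smul_eq_mul,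
    smul_eq_mul, mul_left_comm]
  gcongr

end

theorem ContinuousLinearMap.abs_det_le_norm_pow (A : V →L[ℝ] V) :
    |A.det| ≤ ‖A‖ ^ finrank ℝ V := by
  borelize V
  have hball := A.lipschitz.lipschitzOnWith.volume_image_le (s := Metric.closedBall 0 1)
  rw [addHaar_image_continuousLinearMap] at hball
  have hpos : volume (Metric.closedBall (0 : V) 1) ≠ 0 :=
    (Metric.measure_closedBall_pos volume 0 one_pos).ne'
  have hdet := (ENNReal.mul_le_mul_iff_left hpos measure_closedBall_lt_top.ne).1 hball
  rwa [← ENNReal.ofReal_le_ofReal_iff (by positivity), ENNReal.ofReal_pow (norm_nonneg _),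
    ofReal_norm]

variable [MeasurableSpace V] [BorelSpace V]

theorem LipschitzOnWith.volume_image_le_lintegral_abs_det_fderiv {K : ℝ≥0} {f : V → V}
    {U : Set V} (hU : IsOpen U) (hf : LipschitzOnWith K f U) :
    volume (f '' U) ≤ ∫⁻ x in U, ENNReal.ofReal |(fderiv ℝ f x).det| := by
  set D := {x | DifferentiableAt ℝ f x}
  have hD : MeasurableSet (U ∩ D) := hU.measurableSet.inter (measurableSet_of_differentiableAt ℝ f)
  have hUD : volume (U \ D) = 0 := by
    have := hf.ae_differentiableAt_of_isOpen hU (μ := volume)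
    rwa [ae_iff, Measure.restrict_apply' hU.measurableSet, inter_comm] at this
  have hfUD : volume (f '' (U \ D)) = 0 :=
    le_antisymm ((hf.mono sdiff_subset).volume_image_le.trans (by rw [hUD, mul_zero])) zero_le
  calc volume (f '' U) ≤ volume (f '' (U ∩ D) ∪ f '' (U \ D)) := by
        rw [← image_union, inter_union_sdiff]
    _ ≤ volume (f '' (U ∩ D)) := (measure_union_le _ _).trans (by rw [hfUD, add_zero])
    _ ≤ ∫⁻ x in U ∩ D, ENNReal.ofReal |(fderiv ℝ f x).det| :=
        addHaar_image_le_lintegral_abs_det_fderiv volume hD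
          fun x hx => hx.2.hasFDerivAt.hasFDerivWithinAt
    _ ≤ ∫⁻ x in U, ENNReal.ofReal |(fderiv ℝ f x).det| := lintegral_mono_set inter_subset_left

theorem LipschitzOnWith.volume_image_eq_of_subset {f : V → V} {U W : Set V}
    (hf : LipschitzOnWith 1 f U) (hfin : volume U ≠ ∞) (hvol : volume U ≤ volume (f '' U))
    (hW : NullMeasurableSet W) (hWU : W ⊆ U) : volume (f '' W) = volume W := by
  have hle : ∀ {s}, s ⊆ U → volume (f '' s) ≤ volume s := fun hs => by
    simpa using (hf.mono hs).volume_image_le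
  refine le_antisymm (hle hWU) ?_
  have hsplit : volume W + volume (U \ W) = volume U := by
    rw [← measure_inter_add_sdiff₀ U hW, inter_eq_right.2 hWU]
  have hsum : volume W + volume (U \ W) ≤ volume (f '' W) + volume (U \ W) :=
    calc volume W + volume (U \ W) = volume U := hsplit
      _ ≤ volume (f '' U) := hvol
      _ = volume (f '' W ∪ f '' (U \ W)) := by rw [← image_union, union_sdiff_cancel hWU]
      _ ≤ volume (f '' W) + volume (f '' (U \ W)) := measure_union_le _ _
      _ ≤ volume (f '' W) + volume (U \ W) := add_le_add le_rfl (hle sdiff_subset)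
  exact (ENNReal.add_le_add_iff_right (measure_ne_top_of_subset sdiff_subset hfin)).1 hsum

theorem LipschitzOnWith.ae_abs_det_fderiv_eq_one {f : V → V} {U : Set V} (hU : IsOpen U)
    (hf : LipschitzOnWith 1 f U) (hfin : volume U ≠ ∞) (hvol : volume U ≤ volume (f '' U)) :
    ∀ᵐ x ∂volume.restrict U, |(fderiv ℝ f x).det| = 1 := by
  set J := fun x => ENNReal.ofReal |(fderiv ℝ f x).det|
  have hJ_le : J ≤ᵐ[volume.restrict U] 1 := by
    refine (ae_restrict_iff' hU.measurableSet).2 (.of_forall fun x hx => ?_)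
    have hDf : ‖fderiv ℝ f x‖ ≤ 1 := by
      simpa using norm_fderiv_le_of_lipschitzOn ℝ (hU.mem_nhds hx) hf
    exact ENNReal.ofReal_le_one.2 ((fderiv ℝ f x).abs_det_le_norm_pow.trans
      (pow_le_one₀ (norm_nonneg _) hDf))
  have hJ_int : ∫⁻ x in U, J x ≤ volume U := by
    simpa using lintegral_mono_ae hJ_le
  have hJ_eq := ae_eq_of_ae_le_of_lintegral_le hJ_le (ne_top_of_le_ne_top hfin hJ_int)
    aemeasurable_const (by simpa using hvol.trans (hf.volume_image_le_lintegral_abs_det_fderiv hU))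
  filter_upwards [hJ_eq] with x hx
  exact ENNReal.ofReal_eq_one.1 hx

theorem LipschitzOnWith.ae_subsingleton_fiber {f : V → V} {U : Set V}
    (hf : LipschitzOnWith 1 f U) (hU : NullMeasurableSet U) (hfin : volume U ≠ ∞)
    (hvol : volume U ≤ volume (f '' U)) : ∀ᵐ y, (U ∩ f ⁻¹' {y}).Subsingleton := by
  refine ae_subsingleton_fiber_of_measure_image_inter_eq_zero fun V₁ V₂ hV₁ hV₂ hV => ?_
  have himage {W : Set V} (hW : NullMeasurableSet W) (hWU : W ⊆ U) :
      volume (f '' W) = volume W := hf.volume_image_eq_of_subset hfin hvol hW hWU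
  have h₁ : NullMeasurableSet (U ∩ V₁) := hU.inter hV₁.measurableSet.nullMeasurableSet
  have h₂ : NullMeasurableSet (U ∩ V₂) := hU.inter hV₂.measurableSet.nullMeasurableSet
  have hunion : volume (f '' (U ∩ V₁) ∪ f '' (U ∩ V₂)) =
      volume (f '' (U ∩ V₁)) + volume (f '' (U ∩ V₂)) := by
    rw [← image_union, himage (h₁.union h₂) (union_subset inter_subset_left inter_subset_left),
      himage h₁ inter_subset_left, himage h₂ inter_subset_left,
      measure_union₀ h₂ (hV.mono inter_subset_right inter_subset_right).aedisjoint]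
  refine measure_inter_eq_zero_of_add_le_measure_union hunion.ge ?_
  rw [hunion, himage h₁ inter_subset_left, himage h₂ inter_subset_left]
  exact ENNReal.add_ne_top.2 ⟨measure_ne_top_of_subset inter_subset_left hfin,
    measure_ne_top_of_subset inter_subset_left hfin⟩

end InnerProductSpace

theorem volume_preserving_one_lipschitz_jacobian_and_fibers_general
    (n : ℕ)
    (U : Set (EuclideanSpace ℝ (Fin n))) (hU : IsOpen U) (hUfin : volume U < ⊤)
    (f : EuclideanSpace ℝ (Fin n) → EuclideanSpace ℝ (Fin n))
    (hlip : LipschitzOnWith 1 f U)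
    (hvol : volume (f '' U) = volume U) :
    (∀ᵐ x ∂(volume.restrict U),
        DifferentiableAt ℝ f x ∧ |(fderiv ℝ f x).det| = 1) ∧
      (∀ᵐ y ∂(volume.restrict (f '' U)), ∃ x, U ∩ f ⁻¹' {y} = {x}) := by
  refine ⟨?_, ?_⟩
  · filter_upwards [hlip.ae_differentiableAt_of_isOpen hU,
      hlip.ae_abs_det_fderiv_eq_one hU hUfin.ne hvol.ge] with x hdiff hdet using ⟨hdiff, hdet⟩
  · rw [ae_restrict_iff' (hU.measurableSet_image_of_continuousOn hlip.continuousOn)]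
    filter_upwards [hlip.ae_subsingleton_fiber hU.nullMeasurableSet hUfin.ne hvol.ge]
      with y hy ⟨x, hxU, hxy⟩
    exact ⟨x, hy.eq_singleton_of_mem ⟨hxU, hxy⟩⟩

/-- A volume-preserving `1`-Lipschitz map on an open set `U ⊆ ℝⁿ` of finite volume has
Jacobian of absolute value `1` almost everywhere, and almost every fiber over its image
is a single point. -/
theorem volume_preserving_one_lipschitz_jacobian_and_fibers
    (n : ℕ) (hn : 1 ≤ n)
    (U : Set (EuclideanSpace ℝ (Fin n))) (hU : IsOpen U) (hUfin : volume U < ⊤)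
    (f : EuclideanSpace ℝ (Fin n) → EuclideanSpace ℝ (Fin n))
    (hlip : LipschitzOnWith 1 f U)
    (hvol : volume (f '' U) = volume U) :
    (∀ᵐ x ∂(volume.restrict U),
        DifferentiableAt ℝ f x ∧ |(fderiv ℝ f x).det| = 1) ∧
      (∀ᵐ y ∂(volume.restrict (f '' U)), ∃ x, U ∩ f ⁻¹' {y} = {x}) :=
  volume_preserving_one_lipschitz_jacobian_and_fibers_general n U hU hUfin f hlip hvol
end

section
/- Let n ≥ 1, let U ⊆ ℝⁿ be an open set, and let f : U → ℝⁿ be an injective 1-Lipschitz map such that for almost every x ∈ U, f is differentiable at x with det Df(x) = 1. Then f is a local isometry: for every x ∈ U there exists ε > 0 with the open ball B(x, ε) contained in U such that ‖f(y) − f(z)‖ = ‖y − z‖ for all y, z ∈ B(x, ε). -/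
/-!
By the change of variables formula, an injective map with Jacobian `1` almost everywhere does
not decrease the volume of balls. If a `1`-Lipschitz such map strictly contracted the distance
`d` between two points `y` and `z`, it would send the disjoint balls of radius `d / 2` around
them into the overlapping balls of radius `d / 2` around `f y` and `f z`, whose union has
volume strictly less than the sum of their volumes.
-/

open MeasureTheory Metric Set

section

variable {E : Type*} [NormedAddCommGroup E] [NormedSpace ℝ E] [FiniteDimensional ℝ E]
  [MeasurableSpace E] [BorelSpace E] (μ : Measure E) [μ.IsAddHaarMeasure]

theorem addHaar_image_eq_of_abs_det_fderiv_eq_one {s : Set E} {f : E → E}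
    {f' : E → E →L[ℝ] E} (hs : MeasurableSet s) (hf' : ∀ x ∈ s, HasFDerivWithinAt f (f' x) s x) (hf : InjOn f s)
    (hdet : ∀ x ∈ s, |(f' x).det| = 1) : μ (f '' s) = μ s := by
  rw [← lintegral_abs_det_fderiv_eq_addHaar_image μ hs hf' hf, ← setLIntegral_one]
  exact setLIntegral_congr_fun hs fun x hx => by simp [hdet x hx]

theorem addHaar_le_addHaar_image_of_ae_det_fderiv_eq_one {s : Set E} {f : E → E}
    (hs : MeasurableSet s) (hf : InjOn f s)
    (hdet : ∀ᵐ x ∂μ.restrict s, DifferentiableAt ℝ f x ∧ (fderiv ℝ f x).det = 1) :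
    μ s ≤ μ (f '' s) := by
  set G := {x | DifferentiableAt ℝ f x ∧ (fderiv ℝ f x).det = 1}
  have hG : MeasurableSet G := (measurableSet_of_differentiableAt ℝ f).inter
    (ContinuousLinearMap.continuous_det.measurable.comp (measurable_fderiv ℝ f)
      (measurableSet_singleton 1))
  have hsG : μ (s \ G) = 0 := by
    rwa [ae_iff, Measure.restrict_apply' hs, inter_comm] at hdet
  calc μ s = μ (s ∩ G) := (measure_inter_conull' hsG).symm
    _ = μ (f '' (s ∩ G)) := by
      refine (addHaar_image_eq_of_abs_det_fderiv_eq_one μ (hs.inter hG)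
        (fun x hx => hx.2.1.hasFDerivAt.hasFDerivWithinAt) (hf.mono inter_subset_left)
        fun x hx => ?_).symm
      simp [hx.2.2]
    _ ≤ μ (f '' s) := measure_mono (image_mono inter_subset_left)

end

theorem measure_ball_union_ball_lt {E : Type*} [NormedAddCommGroup E] [NormedSpace ℝ E]
    [ProperSpace E] [MeasurableSpace E] [OpensMeasurableSpace E] (μ : Measure E)
    [IsFiniteMeasureOnCompacts μ] [μ.IsOpenPosMeasure] {a b : E} {r : ℝ}
    (hab : dist a b < 2 * r) : μ (ball a r ∪ ball b r) < μ (ball a r) + μ (ball b r) := by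
  have hmid : (ball a r ∩ ball b r).Nonempty := by
    refine ⟨midpoint ℝ a b, ?_, ?_⟩
    · rw [mem_ball, dist_comm, dist_left_midpoint]
      simp only [Real.norm_ofNat]; linarith
    · rw [mem_ball, dist_comm, dist_right_midpoint]
      simp only [Real.norm_ofNat]; linarith
  rw [← measure_union_add_inter _ measurableSet_ball]
  refine ENNReal.lt_add_right (measure_union_lt_top measure_ball_lt_top measure_ball_lt_top).ne
    ((isOpen_ball.inter isOpen_ball).measure_pos μ hmid).ne'

theorem LipschitzOnWith.image_ball_subset_ball {α β : Type*} [PseudoMetricSpace α]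
    [PseudoMetricSpace β] {f : α → β} {s : Set α} {c : α} {r : ℝ}
    (hf : LipschitzOnWith 1 f s) (hc : c ∈ s) (hs : ball c r ⊆ s) :
    f '' ball c r ⊆ ball (f c) r := by
  rintro _ ⟨p, hp, rfl⟩
  exact (by simpa using hf.dist_le_mul p (hs hp) c hc : dist (f p) (f c) ≤ dist p c).trans_lt hp

theorem dist_image_eq_of_addHaar_le_addHaar_image {E : Type*} [NormedAddCommGroup E]
    [NormedSpace ℝ E] [FiniteDimensional ℝ E] [MeasurableSpace E] [BorelSpace E]
    (μ : Measure E) [μ.IsAddHaarMeasure] {U : Set E} {f : E → E}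
    (hf : LipschitzOnWith 1 f U) (hinj : InjOn f U)
    (hvol : ∀ c r, ball c r ⊆ U → μ (ball c r) ≤ μ (f '' ball c r)) {y z : E}
    (hy : ball y (dist y z / 2) ⊆ U) (hz : ball z (dist y z / 2) ⊆ U) :
    dist (f y) (f z) = dist y z := by
  rcases eq_or_ne y z with rfl | hyz
  · simp
  set r := dist y z / 2
  have hr : 0 < r := half_pos (dist_pos.2 hyz)
  have hyU : y ∈ U := hy (mem_ball_self hr)
  have hzU : z ∈ U := hz (mem_ball_self hr)
  refine le_antisymm (by simpa using hf.dist_le_mul y hyU z hzU) (not_lt.1 fun hlt => ?_)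
  have hdisj : Disjoint (f '' ball y r) (f '' ball z r) :=
    (ball_disjoint_ball (by simp [r])).image hinj hy hz
  have hmeas : MeasurableSet (f '' ball z r) :=
    measurableSet_ball.image_of_continuousOn_injOn (hf.continuousOn.mono hz) (hinj.mono hz)
  refine lt_irrefl (μ (ball (f y) r) + μ (ball (f z) r)) ?_
  calc μ (ball (f y) r) + μ (ball (f z) r)
      = μ (ball y r) + μ (ball z r) := by simp only [Measure.addHaar_ball_center μ]
    _ ≤ μ (f '' ball y r) + μ (f '' ball z r) := add_le_add (hvol y r hy) (hvol z r hz)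
    _ = μ (f '' ball y r ∪ f '' ball z r) := (measure_union hdisj hmeas).symm
    _ ≤ μ (ball (f y) r ∪ ball (f z) r) := measure_mono <| union_subset_union
        (hf.image_ball_subset_ball hyU hy) (hf.image_ball_subset_ball hzU hz)
    _ < μ (ball (f y) r) + μ (ball (f z) r) :=
        measure_ball_union_ball_lt μ (by simpa [r, mul_div_cancel₀] using hlt)

theorem injective_one_lipschitz_unit_jacobian_local_isometry_general
    (n : ℕ)
    (U : Set (EuclideanSpace ℝ (Fin n))) (hU : IsOpen U)
    (f : EuclideanSpace ℝ (Fin n) → EuclideanSpace ℝ (Fin n))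
    (hinj : Set.InjOn f U) (hlip : LipschitzOnWith 1 f U)
    (hjac : ∀ᵐ x ∂(volume.restrict U),
      DifferentiableAt ℝ f x ∧ (fderiv ℝ f x).det = 1) :
    ∀ x ∈ U, ∃ ε : ℝ, 0 < ε ∧ Metric.ball x ε ⊆ U ∧
      ∀ y ∈ Metric.ball x ε, ∀ z ∈ Metric.ball x ε, ‖f y - f z‖ = ‖y - z‖ := by
  intro x hx
  obtain ⟨ε, hε, hball⟩ := Metric.isOpen_iff.1 hU x hx
  have hvol (c : EuclideanSpace ℝ (Fin n)) (r : ℝ) (hcr : ball c r ⊆ U) :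
      volume (ball c r) ≤ volume (f '' ball c r) :=
    addHaar_le_addHaar_image_of_ae_det_fderiv_eq_one volume measurableSet_ball (hinj.mono hcr)
      (ae_restrict_of_ae_restrict_of_subset hcr hjac)
  have hsub : ∀ y ∈ ball x (ε / 2), ∀ z ∈ ball x (ε / 2), ball y (dist y z / 2) ⊆ U :=
    fun y hy z hz => (ball_subset_ball' (by
      linarith [dist_triangle y x z, mem_ball.1 hy, mem_ball'.1 hz])).trans hball
  refine ⟨ε / 2, half_pos hε, (ball_subset_ball (half_le_self hε.le)).trans hball,
    fun y hy z hz => ?_⟩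
  rw [← dist_eq_norm, ← dist_eq_norm]
  exact dist_image_eq_of_addHaar_le_addHaar_image volume hlip hinj hvol (hsub y hy z hz)
    (dist_comm y z ▸ hsub z hz y hy)

/-- An injective `1`-Lipschitz map on an open set `U ⊆ ℝⁿ` whose Jacobian determinant
equals `1` almost everywhere is a local isometry. -/
theorem injective_one_lipschitz_unit_jacobian_local_isometry
    (n : ℕ) (hn : 1 ≤ n)
    (U : Set (EuclideanSpace ℝ (Fin n))) (hU : IsOpen U)
    (f : EuclideanSpace ℝ (Fin n) → EuclideanSpace ℝ (Fin n))
    (hinj : Set.InjOn f U) (hlip : LipschitzOnWith 1 f U)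
    (hjac : ∀ᵐ x ∂(volume.restrict U),
      DifferentiableAt ℝ f x ∧ (fderiv ℝ f x).det = 1) :
    ∀ x ∈ U, ∃ ε : ℝ, 0 < ε ∧ Metric.ball x ε ⊆ U ∧
      ∀ y ∈ Metric.ball x ε, ∀ z ∈ Metric.ball x ε, ‖f y - f z‖ = ‖y - z‖ :=
  injective_one_lipschitz_unit_jacobian_local_isometry_general n U hU f hinj hlip hjac
end
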